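/- arXiv:2408.00110 — 7 statements merged into one kernel-verified Lean document; each statement's English description precedes it below -/
import Mathlib

section
/- Let S be a finite set and F = F(S) the free group on S. A Borel probability measure μ on {0,1}^F is an invariant random subgroup of F (i.e., μ ∈ IRS(F)) if and only if for every finite subset B ⊆ F the pushforward R_{B*}μ belongs to Q_B. Equivalently, the intersection over all finite B ⊆ F of the sets Q̃_B = R_{B*}^{-1}(Q_B) equals IRS(F). -/
open MeasureTheory

/-- `A : ↥B → Bool` is (the indicator of) a pseudo subgroup of `B ⊆ F(S)`:
there is a subgroup `H ≤ F(S)` with `H ∩ B = A`. -/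
def IsPseudoSubgroup {S : Type*} (B : Set (FreeGroup S)) (A : ↥B → Bool) : Prop :=
  ∃ H : Subgroup (FreeGroup S), ∀ b : ↥B, A b = true ↔ (b : FreeGroup S) ∈ H

/-- The cylinder set `𝒞_B(K,L)` of subsets of `B` containing `K` and disjoint from `L`
(for `K, L ⊆ B`), in indicator form. -/
def CSet {S : Type*} (B K L : Set (FreeGroup S)) : Set (↥B → Bool) :=
  {A | ∀ b : ↥B, ((b : FreeGroup S) ∈ K → A b = true) ∧ ((b : FreeGroup S) ∈ L → A b = false)}

/-- `π` is a pseudo invariant random subgroup over `B`: a Borel probability measure on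
`{0,1}^B` concentrated on pseudo subgroups of `B`, which is `S`-invariant when defined. -/
def IsPseudoIRS {S : Type*} [Fintype S] (B : Set (FreeGroup S))
    (π : Measure (↥B → Bool)) : Prop :=
  π {A | IsPseudoSubgroup B A} = 1 ∧
  ∀ K L : Set (FreeGroup S), K.Finite → L.Finite → K ⊆ B → L ⊆ B →
    (∀ s : S, ∀ g ∈ ({FreeGroup.of s, (FreeGroup.of s)⁻¹} : Set (FreeGroup S)),
      (fun w => g * w * g⁻¹) '' K ⊆ B ∧ (fun w => g * w * g⁻¹) '' L ⊆ B) →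
    ∀ s : S, ∀ g ∈ ({FreeGroup.of s, (FreeGroup.of s)⁻¹} : Set (FreeGroup S)),
      π (CSet B K L) =
        π (CSet B ((fun w => g * w * g⁻¹) '' K) ((fun w => g * w * g⁻¹) '' L))

/-!
Both sides only speak about the values of `μ` on the cylinders `{A | K ⊆ A, A ∩ L = ∅}` with
`K, L` finite. Being a subgroup is the countable conjunction of the conditions `1 ∈ A`,
`u, v ∈ A → u * v ∈ A` and `u ∈ A → u⁻¹ ∈ A`, each of which is decided by the restriction of `A`
to a finite set, so `μ` lives on subgroups iff every restriction lives on pseudo subgroups.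
The cylinders form a π-system generating the product σ-algebra, so `μ` is conjugation invariant
iff conjugation preserves the measure of every cylinder. Taking `B` large enough to contain `K`,
`L` and all their conjugates by generators, the pseudo IRS condition gives this for conjugation
by a generator, and the maps preserving cylinder measures are closed under composition.
-/

open Set

lemma prob_iInter_eq_one_iff {α ι : Type*} [MeasurableSpace α] {μ : Measure α}
    [IsProbabilityMeasure μ] [Countable ι] {s : ι → Set α} (hs : ∀ i, MeasurableSet (s i)) :
    μ (⋂ i, s i) = 1 ↔ ∀ i, μ (s i) = 1 := by
  rw [← prob_compl_eq_zero_iff (.iInter hs), compl_iInter, measure_iUnion_null_iff]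
  exact forall_congr' fun i => prob_compl_eq_zero_iff (hs i)

section BoolCylinder

variable {ι κ : Type*}

def boolCylinder (K L : Set ι) : Set (ι → Bool) :=
  {A | (∀ k ∈ K, A k = true) ∧ ∀ l ∈ L, A l = false}

@[simp]
lemma boolCylinder_empty : boolCylinder (∅ : Set ι) ∅ = univ := by
  simp [boolCylinder]

lemma boolCylinder_inter (K L K' L' : Set ι) :
    boolCylinder K L ∩ boolCylinder K' L' = boolCylinder (K ∪ K') (L ∪ L') := by
  ext A
  simp only [boolCylinder, mem_inter_iff, mem_ofPred_eq, mem_union, or_imp, forall_and]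
  tauto

lemma preimage_comp_boolCylinder (f : ι → κ) (K L : Set ι) :
    (fun A : κ → Bool => A ∘ f) ⁻¹' boolCylinder K L = boolCylinder (f '' K) (f '' L) := by
  ext A
  simp [boolCylinder]

lemma measurableSet_boolCylinder {K L : Set ι} (hK : K.Finite) (hL : L.Finite) :
    MeasurableSet (boolCylinder K L) := by
  have hcyl : boolCylinder K L = (⋂ k ∈ K, (fun A : ι → Bool => A k) ⁻¹' {true}) ∩
      ⋂ l ∈ L, (fun A : ι → Bool => A l) ⁻¹' {false} := by
    ext A
    simp [boolCylinder]
  rw [hcyl]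
  exact (MeasurableSet.biInter hK.countable fun k _ =>
      measurable_pi_apply k (measurableSet_singleton _)).inter
    (.biInter hL.countable fun l _ => measurable_pi_apply l (measurableSet_singleton _))

variable (ι) in
def boolCylinders : Set (Set (ι → Bool)) :=
  {t | ∃ K L : Set ι, K.Finite ∧ L.Finite ∧ boolCylinder K L = t}

lemma isPiSystem_boolCylinders : IsPiSystem (boolCylinders ι) := by
  rintro _ ⟨K, L, hK, hL, rfl⟩ _ ⟨K', L', hK', hL', rfl⟩ -
  exact ⟨K ∪ K', L ∪ L', hK.union hK', hL.union hL', (boolCylinder_inter K L K' L').symm⟩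

lemma generateFrom_boolCylinders :
    MeasurableSpace.pi = MeasurableSpace.generateFrom (boolCylinders ι) := by
  refine le_antisymm ?_ (MeasurableSpace.generateFrom_le ?_)
  · rw [MeasurableSpace.pi_eq_generateFrom_projections]
    refine MeasurableSpace.generateFrom_le ?_
    rintro _ ⟨i, s, -, rfl⟩
    rw [← biUnion_preimage_singleton]
    refine @MeasurableSet.biUnion _ _ (.generateFrom _) _ _ s.to_countable fun b _ =>
      MeasurableSpace.measurableSet_generateFrom ?_
    cases b
    · exact ⟨∅, {i}, finite_empty, finite_singleton i, by ext; simp [boolCylinder]⟩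
    · exact ⟨{i}, ∅, finite_singleton i, finite_empty, by ext; simp [boolCylinder]⟩
  · rintro _ ⟨K, L, hK, hL, rfl⟩
    exact measurableSet_boolCylinder hK hL

lemma MeasureTheory.Measure.ext_of_boolCylinder {μ ν : Measure (ι → Bool)} [IsFiniteMeasure μ]
    (h : ∀ K L : Set ι, K.Finite → L.Finite → μ (boolCylinder K L) = ν (boolCylinder K L)) :
    μ = ν :=
  ext_of_generate_finite _ generateFrom_boolCylinders isPiSystem_boolCylinders
    (by rintro _ ⟨K, L, hK, hL, rfl⟩; exact h K L hK hL)
    (by simpa using h ∅ ∅ finite_empty finite_empty)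

def PreservesBoolCylinders (μ : Measure (ι → Bool)) (f : ι → ι) : Prop :=
  ∀ K L : Set ι, K.Finite → L.Finite → μ (boolCylinder K L) = μ (boolCylinder (f '' K) (f '' L))

namespace PreservesBoolCylinders

variable {μ : Measure (ι → Bool)} {f g : ι → ι}

lemma id : PreservesBoolCylinders μ fun x => x := by
  simp [PreservesBoolCylinders]

lemma comp (hf : PreservesBoolCylinders μ f) (hg : PreservesBoolCylinders μ g) :
    PreservesBoolCylinders μ (f ∘ g) := by
  intro K L hK hL
  rw [hg K L hK hL, hf _ _ (hK.image g) (hL.image g), image_comp, image_comp]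

end PreservesBoolCylinders

lemma map_comp_eq_self_iff {μ : Measure (ι → Bool)} [IsFiniteMeasure μ] {f : ι → ι} :
    μ.map (fun A => A ∘ f) = μ ↔ PreservesBoolCylinders μ f := by
  have hf : Measurable fun A : ι → Bool => A ∘ f := by fun_prop
  have hmap : ∀ K L : Set ι, K.Finite → L.Finite →
      μ.map (fun A => A ∘ f) (boolCylinder K L) = μ (boolCylinder (f '' K) (f '' L)) :=
    fun K L hK hL => by
      rw [Measure.map_apply hf (measurableSet_boolCylinder hK hL), preimage_comp_boolCylinder]
  refine ⟨fun h K L hK hL => ?_, fun h => ?_⟩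
  · rw [← hmap K L hK hL, h]
  · exact Measure.ext_of_boolCylinder fun K L hK hL => by rw [hmap K L hK hL, h K L hK hL]

end BoolCylinder

lemma forall_map_conj_eq_self_iff {G : Type*} [Group G] {μ : Measure (G → Bool)}
    [IsFiniteMeasure μ] :
    (∀ w : G, μ.map (fun (A : G → Bool) (u : G) => A (w⁻¹ * u * w)) = μ) ↔
      ∀ w : G, PreservesBoolCylinders μ fun u => w * u * w⁻¹ := by
  rw [inv_surjective.forall]
  simp only [inv_inv]
  exact forall_congr' fun w => map_comp_eq_self_iff

namespace FreeGroup

variable {S : Type*}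

lemma preservesBoolCylinders_conj {μ : Measure (FreeGroup S → Bool)}
    (h : ∀ s : S, ∀ g ∈ ({of s, (of s)⁻¹} : Set (FreeGroup S)),
      PreservesBoolCylinders μ fun w => g * w * g⁻¹)
    (w : FreeGroup S) : PreservesBoolCylinders μ fun u => w * u * w⁻¹ := by
  induction w using FreeGroup.induction_on with
  | C1 => simpa only [one_mul, inv_one, mul_one] using PreservesBoolCylinders.id
  | of s => exact h s _ (Or.inl rfl)
  | inv_of s _ => exact h s _ (Or.inr rfl)
  | mul x y hx hy =>
    have hconj : (fun u => x * y * u * (x * y)⁻¹) =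
        (fun u => x * u * x⁻¹) ∘ fun u => y * u * y⁻¹ := by
      funext u
      simp only [Function.comp_apply]
      group
    rw [hconj]
    exact hx.comp hy

lemma exists_finset_conj_image_subset [Finite S] {K L : Set (FreeGroup S)} (hK : K.Finite)
    (hL : L.Finite) :
    ∃ B : Finset (FreeGroup S), K ⊆ B ∧ L ⊆ B ∧
      ∀ s : S, ∀ g ∈ ({of s, (of s)⁻¹} : Set (FreeGroup S)),
        (fun w => g * w * g⁻¹) '' K ⊆ B ∧ (fun w => g * w * g⁻¹) '' L ⊆ B := by
  set T : Set (FreeGroup S) := insert 1 (⋃ s : S, {of s, (of s)⁻¹})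
  have hT : T.Finite := (finite_iUnion fun s => (finite_singleton _).insert _).insert 1
  have hB := hT.image2 (fun g w => g * w * g⁻¹) (hK.union hL)
  refine ⟨hB.toFinset, ?_⟩
  rw [hB.coe_toFinset]
  have hone : ∀ w ∈ K ∪ L, w ∈ image2 (fun g w => g * w * g⁻¹) T (K ∪ L) := fun w hw => by
    have : 1 * w * 1⁻¹ ∈ image2 (fun g w => g * w * g⁻¹) T (K ∪ L) :=
      mem_image2_of_mem (mem_insert 1 _) hw
    rwa [one_mul, inv_one, mul_one] at this
  have hgen : ∀ s : S, ∀ g ∈ ({of s, (of s)⁻¹} : Set (FreeGroup S)), ∀ w ∈ K ∪ L,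
      g * w * g⁻¹ ∈ image2 (fun g w => g * w * g⁻¹) T (K ∪ L) := fun s g hg w hw =>
    mem_image2_of_mem (mem_insert_of_mem 1 (mem_iUnion_of_mem s hg)) hw
  refine ⟨fun k hk => hone k (.inl hk), fun l hl => hone l (.inr hl), fun s g hg => ⟨?_, ?_⟩⟩
  · rintro _ ⟨k, hk, rfl⟩
    exact hgen s g hg k (.inl hk)
  · rintro _ ⟨l, hl, rfl⟩
    exact hgen s g hg l (.inr hl)

lemma domRestrict_preimage_CSet {B K L : Set (FreeGroup S)} (hK : K ⊆ B) (hL : L ⊆ B) :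
    B.domRestrict ⁻¹' CSet B K L = boolCylinder K L := by
  ext A
  simp only [mem_preimage, CSet, boolCylinder, mem_ofPred_eq, domRestrict, Subtype.forall]
  exact ⟨fun h => ⟨fun k hk => (h k (hK hk)).1 hk, fun l hl => (h l (hL hl)).2 hl⟩,
    fun h b _ => ⟨h.1 b, h.2 b⟩⟩

lemma map_domRestrict_CSet (μ : Measure (FreeGroup S → Bool)) {B : Finset (FreeGroup S)}
    {K L : Set (FreeGroup S)} (hK : K ⊆ B) (hL : L ⊆ B) :
    μ.map (B : Set (FreeGroup S)).domRestrict (CSet B K L) = μ (boolCylinder K L) := by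
  rw [Measure.map_apply (measurable_restrict _) (toFinite _).measurableSet,
    domRestrict_preimage_CSet hK hL]

lemma preservesBoolCylinders_conj_of_isPseudoIRS [Fintype S] {μ : Measure (FreeGroup S → Bool)}
    (h : ∀ B : Finset (FreeGroup S),
      IsPseudoIRS (B : Set (FreeGroup S)) (μ.map (B : Set (FreeGroup S)).domRestrict))
    (s : S) (g : FreeGroup S) (hg : g ∈ ({of s, (of s)⁻¹} : Set (FreeGroup S))) :
    PreservesBoolCylinders μ fun w => g * w * g⁻¹ := by
  intro K L hK hL
  obtain ⟨B, hKB, hLB, hconj⟩ := exists_finset_conj_image_subset hK hL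
  have hinv := (h B).2 K L hK hL hKB hLB hconj s g hg
  rwa [map_domRestrict_CSet μ hKB hLB,
    map_domRestrict_CSet μ (hconj s g hg).1 (hconj s g hg).2] at hinv

lemma setOf_isSubgroup_eq_iInter :
    {A : FreeGroup S → Bool | ∃ H : Subgroup (FreeGroup S), ∀ w, A w = true ↔ w ∈ H} =
      ⋂ B : Finset (FreeGroup S),
        (B : Set (FreeGroup S)).domRestrict ⁻¹'
          {A | IsPseudoSubgroup (B : Set (FreeGroup S)) A} := by
  classical
  refine Subset.antisymm (fun A ⟨H, hH⟩ => mem_iInter.2 fun B => ⟨H, fun b => hH b⟩) ?_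
  intro A hA
  have hfin : ∀ B : Finset (FreeGroup S), ∃ H : Subgroup (FreeGroup S),
      ∀ b ∈ B, A b = true ↔ b ∈ H := fun B =>
    let ⟨H, hH⟩ := mem_iInter.1 hA B
    ⟨H, fun b hb => hH ⟨b, hb⟩⟩
  refine ⟨{ carrier := {w | A w = true}, mul_mem' := ?_, one_mem' := ?_, inv_mem' := ?_ },
    fun w => Iff.rfl⟩
  · intro u v hu hv
    obtain ⟨H, hH⟩ := hfin {u, v, u * v}
    exact (hH _ (by simp)).2 (H.mul_mem ((hH u (by simp)).1 hu) ((hH v (by simp)).1 hv))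
  · obtain ⟨H, hH⟩ := hfin {1}
    exact (hH 1 (by simp)).2 H.one_mem
  · intro u hu
    obtain ⟨H, hH⟩ := hfin {u, u⁻¹}
    exact (hH _ (by simp)).2 (H.inv_mem ((hH u (by simp)).1 hu))

lemma measure_setOf_isSubgroup_eq_one_iff [Countable S] (μ : Measure (FreeGroup S → Bool))
    [IsProbabilityMeasure μ] :
    μ {A | ∃ H : Subgroup (FreeGroup S), ∀ w, A w = true ↔ w ∈ H} = 1 ↔
      ∀ B : Finset (FreeGroup S),
        μ.map (B : Set (FreeGroup S)).domRestrict
          {A | IsPseudoSubgroup (B : Set (FreeGroup S)) A} = 1 := by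
  rw [setOf_isSubgroup_eq_iInter,
    prob_iInter_eq_one_iff fun B => measurable_restrict _ (toFinite _).measurableSet]
  exact forall_congr' fun B => by
    rw [Measure.map_apply (measurable_restrict _) (toFinite _).measurableSet]

end FreeGroup

/-- A Borel probability measure `μ` on `{0,1}^{F(S)}` is an invariant random subgroup of
the free group `F(S)` (concentrated on subgroups and invariant under the conjugation
action `(w.A)(u) = A(w⁻¹uw)`) iff for every finite `B ⊆ F(S)` the pushforward of `μ`
along the restriction map `R_B` is a pseudo invariant random subgroup over `B`,
i.e. `IRS(F) = ⋂_{B finite} Q̃_B`. -/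
theorem isIRS_iff_pseudoIRS (S : Type*) [Fintype S]
    (μ : Measure (FreeGroup S → Bool)) [IsProbabilityMeasure μ] :
    (μ {A : FreeGroup S → Bool |
        ∃ H : Subgroup (FreeGroup S), ∀ w : FreeGroup S, A w = true ↔ w ∈ H} = 1 ∧
     ∀ w : FreeGroup S,
        μ.map (fun (A : FreeGroup S → Bool) (u : FreeGroup S) => A (w⁻¹ * u * w)) = μ) ↔
    ∀ B : Finset (FreeGroup S),
      IsPseudoIRS (B : Set (FreeGroup S))
        (μ.map fun (A : FreeGroup S → Bool) (b : ↥(B : Set (FreeGroup S))) =>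
          A (b : FreeGroup S)) := by
  change _ ↔ ∀ B : Finset (FreeGroup S),
    IsPseudoIRS (B : Set (FreeGroup S)) (μ.map (B : Set (FreeGroup S)).domRestrict)
  rw [FreeGroup.measure_setOf_isSubgroup_eq_one_iff, forall_map_conj_eq_self_iff]
  constructor
  · rintro ⟨hsub, hconj⟩ B
    refine ⟨hsub B, fun K L hK hL hKB hLB himg s g hg => ?_⟩
    rw [FreeGroup.map_domRestrict_CSet μ hKB hLB,
      FreeGroup.map_domRestrict_CSet μ (himg s g hg).1 (himg s g hg).2]
    exact hconj g K L hK hL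
  · intro h
    exact ⟨fun B => (h B).1,
      FreeGroup.preservesBoolCylinders_conj
        (FreeGroup.preservesBoolCylinders_conj_of_isPseudoIRS h)⟩
end

section
/- Let S be a finite set, Y a finite nonempty set, and ρ, φ : S → Sym(Y) two maps, extended to homomorphisms F(S) → Sym(Y). Let w ∈ F(S) be given by a reduced word w = s_1^{ε_1} ··· s_ℓ^{ε_ℓ} with s_j ∈ S and ε_j ∈ {±1}. Then the proportion of y ∈ Y for which exactly one of 'w ∈ Stab(ρ,y)' and 'w ∈ Stab(φ,y)' holds is at most Σ_{j=1}^{ℓ} d_H(ρ(s_j), φ(s_j)) = Σ_{s∈S} v_s(w) · d_H(ρ(s), φ(s)). -/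
/-!
The Hamming distance `#{y | σ y ≠ τ y}` is a bi-invariant metric on `Perm Y`, hence subadditive
on products and invariant under inversion. So evaluating the reduced word of `w` letter by letter
gives `d_H(ρ w, φ w) ≤ Σ_j d_H(ρ s_j, φ s_j)`, and a point fixed by exactly one of `ρ w`, `φ w`
is a point where they differ.
-/

open Finset

theorem hammingDist_comp_equiv {ι κ β : Type*} [Fintype ι] [Fintype κ] [DecidableEq β]
    (e : ι ≃ κ) (f g : κ → β) : hammingDist (f ∘ e) (g ∘ e) = hammingDist f g :=
  card_equiv e (by simp)

theorem natCard_subtype_ne_eq_hammingDist {ι β : Type*} [Fintype ι] [DecidableEq β]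
    (f g : ι → β) : Nat.card {i // f i ≠ g i} = hammingDist f g := by
  rw [Nat.card_eq_fintype_card, Fintype.card_subtype, hammingDist]

theorem List.sum_map_eq_sum_count_mul {ι : Type*} [Fintype ι] [DecidableEq ι]
    (l : List ι) (c : ι → ℕ) : (l.map c).sum = ∑ i, l.count i * c i := by
  rw [Finset.sum_list_map_count]
  refine sum_subset (subset_univ _) fun i _ hi => ?_
  rw [List.count_eq_zero_of_not_mem (by simpa using hi), zero_smul]

namespace Equiv.Perm

variable {Y : Type*} [Fintype Y] [DecidableEq Y]

theorem hammingDist_mul_left (σ τ τ' : Perm Y) :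
    hammingDist ⇑(σ * τ) ⇑(σ * τ') = hammingDist ⇑τ ⇑τ' :=
  hammingDist_comp (fun _ => σ) fun _ => σ.injective

theorem hammingDist_mul_right (σ σ' τ : Perm Y) :
    hammingDist ⇑(σ * τ) ⇑(σ' * τ) = hammingDist ⇑σ ⇑σ' :=
  hammingDist_comp_equiv τ σ σ'

theorem hammingDist_mul_le (σ σ' τ τ' : Perm Y) :
    hammingDist ⇑(σ * τ) ⇑(σ' * τ') ≤ hammingDist ⇑σ ⇑σ' + hammingDist ⇑τ ⇑τ' := by
  calc hammingDist ⇑(σ * τ) ⇑(σ' * τ')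
      ≤ hammingDist ⇑(σ * τ) ⇑(σ * τ') + hammingDist ⇑(σ * τ') ⇑(σ' * τ') :=
        hammingDist_triangle _ _ _
    _ = hammingDist ⇑σ ⇑σ' + hammingDist ⇑τ ⇑τ' := by
        rw [hammingDist_mul_left, hammingDist_mul_right, add_comm]

theorem hammingDist_inv (σ τ : Perm Y) : hammingDist ⇑σ⁻¹ ⇑τ⁻¹ = hammingDist ⇑σ ⇑τ := by
  calc hammingDist ⇑σ⁻¹ ⇑τ⁻¹ = hammingDist ⇑(τ * σ⁻¹ * σ) ⇑(τ * τ⁻¹ * σ) := by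
        rw [← hammingDist_mul_left τ, hammingDist_mul_right]
    _ = hammingDist ⇑σ ⇑τ := by rw [inv_mul_cancel_right, mul_inv_cancel, one_mul, hammingDist_comm]

theorem hammingDist_list_prod_le {ι : Type*} (f g : ι → Perm Y) (l : List ι) :
    hammingDist ⇑(l.map f).prod ⇑(l.map g).prod ≤
      (l.map fun i => hammingDist ⇑(f i) ⇑(g i)).sum := by
  induction l with
  | nil => simp
  | cons i l ih =>
    simp only [List.map_cons, List.prod_cons, List.sum_cons]
    exact (hammingDist_mul_le _ _ _ _).trans (Nat.add_le_add_left ih _)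

theorem card_xor_fixed_le_hammingDist (σ τ : Perm Y) :
    Nat.card {y // Xor (σ y = y) (τ y = y)} ≤ hammingDist ⇑σ ⇑τ := by
  rw [← natCard_subtype_ne_eq_hammingDist]
  refine Nat.card_mono (Set.toFinite _) fun y hy => ?_
  rcases hy with ⟨hσ, hτ⟩ | ⟨hτ, hσ⟩
  · exact fun h => hτ (h ▸ hσ)
  · exact fun h => hσ (h ▸ hτ)

end Equiv.Perm

namespace FreeGroup

open Equiv

variable {S Y : Type*} [DecidableEq S] [Fintype Y] [DecidableEq Y]

theorem lift_eq_prod_toWord {G : Type*} [Group G] (f : S → G) (w : FreeGroup S) :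
    lift f w = (w.toWord.map fun x => cond x.2 (f x.1) (f x.1)⁻¹).prod := by
  conv_lhs => rw [← mk_toWord (x := w)]
  exact lift_mk

theorem hammingDist_lift_le (ρ φ : S → Perm Y) (w : FreeGroup S) :
    hammingDist ⇑(lift ρ w) ⇑(lift φ w) ≤
      (w.toWord.map fun x => hammingDist ⇑(ρ x.1) ⇑(φ x.1)).sum := by
  rw [lift_eq_prod_toWord, lift_eq_prod_toWord]
  refine (Perm.hammingDist_list_prod_le _ _ _).trans_eq (congrArg _ (List.map_congr_left ?_))
  rintro ⟨s, _ | _⟩ _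
  · exact Perm.hammingDist_inv _ _
  · rfl

end FreeGroup

theorem stab_symmDiff_le_weighted_hamming_general (S : Type*) [Fintype S] [DecidableEq S]
    (Y : Type*) [Fintype Y]
    (ρ φ : S → Equiv.Perm Y) (w : FreeGroup S) :
    (Nat.card {y : Y //
        Xor' (FreeGroup.lift ρ w y = y) (FreeGroup.lift φ w y = y)} : ℝ)
        / Fintype.card Y
      ≤ ∑ s : S, ((w.toWord.map Prod.fst).count s : ℝ) *
          ((Nat.card {y : Y // ρ s y ≠ φ s y} : ℝ) / Fintype.card Y) := by
  classical
  have key : Nat.card {y : Y // Xor (FreeGroup.lift ρ w y = y) (FreeGroup.lift φ w y = y)} ≤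
      ∑ s : S, (w.toWord.map Prod.fst).count s * Nat.card {y : Y // ρ s y ≠ φ s y} := by
    simp only [natCard_subtype_ne_eq_hammingDist, ← List.sum_map_eq_sum_count_mul,
      List.map_map]
    exact (Equiv.Perm.card_xor_fixed_le_hammingDist _ _).trans
      (FreeGroup.hammingDist_lift_le ρ φ w)
  simp only [mul_div_assoc', ← sum_div]
  gcongr
  exact_mod_cast key

/-- For two maps `ρ, φ : S → Sym(Y)` (extended to homomorphisms of `F(S)`) and a word
`w ∈ F(S)`, the proportion of `y ∈ Y` for which exactly one of `w ∈ Stab(ρ,y)` and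
`w ∈ Stab(φ,y)` holds is at most `Σ_{s ∈ S} v_s(w) · d_H(ρ(s), φ(s))`, where `v_s(w)`
is the number of occurrences of `s` or `s⁻¹` in the reduced word of `w`. -/
theorem stab_symmDiff_le_weighted_hamming (S : Type*) [Fintype S] [DecidableEq S]
    (Y : Type*) [Fintype Y] [Nonempty Y]
    (ρ φ : S → Equiv.Perm Y) (w : FreeGroup S) :
    (Nat.card {y : Y //
        Xor' (FreeGroup.lift ρ w y = y) (FreeGroup.lift φ w y = y)} : ℝ)
        / Fintype.card Y
      ≤ ∑ s : S, ((w.toWord.map Prod.fst).count s : ℝ) *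
          ((Nat.card {y : Y // ρ s y ≠ φ s y} : ℝ) / Fintype.card Y) :=
  stab_symmDiff_le_weighted_hamming_general S Y ρ φ w
end

section
/- Let ε > 0, let T be a subgroup test over the finite set S with significance function s_T, let X ⊆ Y be finite nonempty sets, and let ρ : S → Sym(X) and φ : S → Sym(Y) be maps with d^{s_T}_edit(ρ, φ) ≤ ε. Then |val(T, Φ(ρ)) − val(T, Φ(φ))| ≤ ε. -/
/-- A subgroup test over `S` with finite challenge index set `Q`: a probability
distribution `μ` on `Q`, and for each `i ∈ Q` a finite subset `K i ⊆ F(S)` with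
a decision function `D i` (applied to `H ∩ K i`). -/
structure SubgroupTest (S Q : Type) [Fintype Q] where
  μ : Q → ℝ
  μ_nonneg : ∀ i, 0 ≤ μ i
  μ_sum : ∑ i, μ i = 1
  K : Q → Finset (FreeGroup S)
  D : Q → Set (FreeGroup S) → Bool

/-- The value `val(T, Φ(ρ))` of the finitely described strategy `Φ(ρ)` induced by the
action `ρ : S → Sym(X)` against the test `T`: the probability, over a uniform `x ∈ X`
and `i ∼ μ`, that `D_i(Stab(ρ,x) ∩ K_i) = 1`. -/
noncomputable def testVal {S Q : Type} [Fintype Q] (T : SubgroupTest S Q)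
    {X : Type} [Fintype X] (ρ : S → Equiv.Perm X) : ℝ :=
  (∑ x : X, ∑ i : Q, T.μ i *
      (if T.D i ({w : FreeGroup S | FreeGroup.lift ρ w x = x} ∩ ↑(T.K i)) then 1 else 0)) /
    Fintype.card X

/-- The significance function `s_T` of a test `T`:
`s_T(s) = E_{i∼μ}[Σ_{w ∈ K_i} v_s(w)]`. -/
noncomputable def significance {S Q : Type} [DecidableEq S] [Fintype Q]
    (T : SubgroupTest S Q) (s : S) : ℝ :=
  ∑ i : Q, T.μ i * ∑ w ∈ T.K i, ((w.toWord.map Prod.fst).count s : ℝ)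

/-- The `sig`-weighted edit distance between `ρ : S → Sym(X)` and `φ : S → Sym(Y)`,
where `X ⊆ Y` via the embedding `ι`:
`min_{θ ∈ Sym(Y)} Σ_s sig(s)·d_H(ρ(s), θ φ(s) θ⁻¹)`, with the generalized normalized
Hamming distance `d_H(σ,τ) = 1 - |{x ∈ X : σ(x) = τ(x)}|/|Y|`. -/
noncomputable def weightedEditDist {S : Type} [Fintype S] (sig : S → ℝ)
    {X Y : Type} [Fintype X] [Fintype Y] (ι : X ↪ Y)
    (ρ : S → Equiv.Perm X) (φ : S → Equiv.Perm Y) : ℝ :=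
  ⨅ θ : Equiv.Perm Y,
    ∑ s : S, sig s *
      (1 - (Nat.card {x : X // ι (ρ s x) = (θ * φ s * θ⁻¹) (ι x)} : ℝ) / Fintype.card Y)

/-! Conjugating `φ` by `θ` does not change its value, so it suffices to compare `ρ` with a single
`ψ : S → Sym(Y)` against `Σ_s s_T(s) · d_H(ρ(s), ψ(s))`. Fix a challenge `i`. If every `w ∈ K_i`
acts compatibly at `x` (that is, `ι (ρ(w) x) = ψ(w) (ι x)`), then `Stab(ρ,x) ∩ K_i` and
`Stab(ψ,ι x) ∩ K_i` coincide and the challenge has the same outcome at `x` and at `ι x`. Reading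
`w` as its reduced word, `w` is incompatible at no more points than the sum, over its letters `s`,
of the number of points where `ρ(s)` and `ψ(s)` disagree. Comparing a uniform point of `X` with a
uniform point of `Y` costs an additional `1 - |X|/|Y|`, and one letter of a nontrivial word of
`K_i` pays for it (if `K_i` contains only the trivial word, the outcome is constant). Averaging
over `i ∼ μ` turns the letter counts into the significance function `s_T`. -/

open Finset

theorem List.sum_map_eq_sum_count {α M : Type} [Fintype α] [DecidableEq α] [AddCommMonoid M]
    (l : List α) (f : α → M) : (l.map f).sum = ∑ a, l.count a • f a := by
  rw [Finset.sum_list_map_count]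
  refine Finset.sum_subset (subset_univ _) fun a _ ha => ?_
  rw [List.count_eq_zero_of_not_mem (by simpa using ha), zero_smul]

section Disagreement

variable {X Y : Type} [Fintype X] [DecidableEq Y] (ι : X ↪ Y)

def disagreeCount (α : Equiv.Perm X) (β : Equiv.Perm Y) : ℕ :=
  #{x | ι (α x) ≠ β (ι x)}

theorem disagreeCount_inv (α : Equiv.Perm X) (β : Equiv.Perm Y) :
    disagreeCount ι α⁻¹ β⁻¹ = disagreeCount ι α β := by
  refine Finset.card_equiv α⁻¹ fun x => ?_
  simp only [mem_filter, mem_univ, true_and, ← Equiv.Perm.mul_apply, mul_inv_cancel,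
    Equiv.Perm.one_apply, not_iff_not]
  rw [Equiv.Perm.eq_inv_iff_eq, eq_comm]

theorem disagreeCount_mul_le (α₁ α₂ : Equiv.Perm X) (β₁ β₂ : Equiv.Perm Y) :
    disagreeCount ι (α₁ * α₂) (β₁ * β₂) ≤ disagreeCount ι α₁ β₁ + disagreeCount ι α₂ β₂ := by
  classical
  have hsub : ({x | ι ((α₁ * α₂) x) ≠ (β₁ * β₂) (ι x)} : Finset X) ⊆
      (({x | ι (α₁ x) ≠ β₁ (ι x)} : Finset X).map α₂.symm.toEmbedding) ∪
        ({x | ι (α₂ x) ≠ β₂ (ι x)} : Finset X) := by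
    intro x
    simp only [mem_union, mem_filter, mem_univ, true_and, mem_map_equiv, Equiv.symm_symm]
    contrapose!
    rintro ⟨h₁, h₂⟩
    rw [Equiv.Perm.mul_apply, h₁, h₂, Equiv.Perm.mul_apply]
  calc disagreeCount ι (α₁ * α₂) (β₁ * β₂)
      ≤ #(({x | ι (α₁ x) ≠ β₁ (ι x)} : Finset X).map α₂.symm.toEmbedding) +
          disagreeCount ι α₂ β₂ := (card_le_card hsub).trans (card_union_le _ _)
    _ = disagreeCount ι α₁ β₁ + disagreeCount ι α₂ β₂ := by rw [card_map]; rfl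

theorem disagreeCount_lift_mk_le {S : Type} (ρ : S → Equiv.Perm X) (ψ : S → Equiv.Perm Y)
    (L : List (S × Bool)) :
    disagreeCount ι (FreeGroup.lift ρ (FreeGroup.mk L)) (FreeGroup.lift ψ (FreeGroup.mk L)) ≤
      ((L.map Prod.fst).map fun s => disagreeCount ι (ρ s) (ψ s)).sum := by
  induction L with
  | nil => simp [disagreeCount]
  | cons p L ih =>
    simp only [FreeGroup.lift_mk, List.map_cons, List.prod_cons, List.sum_cons] at ih ⊢
    refine (disagreeCount_mul_le ι _ _ _ _).trans (add_le_add (le_of_eq ?_) ih)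
    cases p.2
    · exact disagreeCount_inv ι _ _
    · rfl

theorem disagreeCount_lift_le {S : Type} [Fintype S] [DecidableEq S] (ρ : S → Equiv.Perm X)
    (ψ : S → Equiv.Perm Y) (w : FreeGroup S) :
    disagreeCount ι (FreeGroup.lift ρ w) (FreeGroup.lift ψ w) ≤
      ∑ s, (w.toWord.map Prod.fst).count s * disagreeCount ι (ρ s) (ψ s) := by
  have h := disagreeCount_lift_mk_le ι ρ ψ w.toWord
  rw [FreeGroup.mk_toWord, List.sum_map_eq_sum_count] at h
  simpa only [smul_eq_mul] using h

end Disagreement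

theorem Finset.sum_mem_Icc_of_mem_Icc {α : Type} (s : Finset α) {f : α → ℝ}
    (hf : ∀ a, f a ∈ Set.Icc 0 1) : ∑ a ∈ s, f a ∈ Set.Icc 0 (#s : ℝ) :=
  ⟨sum_nonneg fun a _ => (hf a).1, by simpa using sum_le_card_nsmul s f 1 fun a _ => (hf a).2⟩

theorem abs_avg_sub_avg_le {X Y : Type} [Fintype X] [Fintype Y] [Nonempty X] (ι : X ↪ Y)
    {a : X → ℝ} {b : Y → ℝ} (ha : ∀ x, a x ∈ Set.Icc 0 1) (hb : ∀ y, b y ∈ Set.Icc 0 1)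
    (B : Finset X) (hB : ∀ x ∉ B, a x = b (ι x)) :
    |(∑ x, a x) / Fintype.card X - (∑ y, b y) / Fintype.card Y| ≤
      ((Fintype.card Y : ℝ) - Fintype.card X + #B) / Fintype.card Y := by
  classical
  have hn : (0 : ℝ) < Fintype.card X := by exact_mod_cast Fintype.card_pos
  have hnm : (Fintype.card X : ℝ) ≤ Fintype.card Y := by
    exact_mod_cast Fintype.card_le_of_embedding ι
  have hm := hn.trans_le hnm
  have hA : ∑ x, a x = ∑ x ∈ Bᶜ, a x + ∑ x ∈ B, a x := (sum_compl_add_sum B a).symm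
  have hB' : ∑ y, b y = ∑ x ∈ Bᶜ, a x + ∑ y ∈ (Bᶜ.map ι)ᶜ, b y := by
    rw [← sum_add_sum_compl (Bᶜ.map ι), sum_map]
    congr 1
    exact sum_congr rfl fun x hx => (hB x (mem_compl.mp hx)).symm
  have hcardX : (#Bᶜ : ℝ) + #B = Fintype.card X := by exact_mod_cast card_compl_add_card B
  have hcardY : (#(Bᶜ.map ι)ᶜ : ℝ) + #Bᶜ = Fintype.card Y := by
    rw [← card_map ι]; exact_mod_cast card_compl_add_card _
  obtain ⟨hc₀, hc₁⟩ := Bᶜ.sum_mem_Icc_of_mem_Icc ha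
  obtain ⟨hp₀, hp₁⟩ := B.sum_mem_Icc_of_mem_Icc ha
  obtain ⟨hq₀, hq₁⟩ := (Bᶜ.map ι)ᶜ.sum_mem_Icc_of_mem_Icc hb
  -- `c` is the common part of both sums; the remainders are `p ≤ #B` and `q ≤ |Y| - |X| + #B`.
  rw [hA, hB', abs_sub_le_iff]
  generalize ∑ x ∈ Bᶜ, a x = c, ∑ x ∈ B, a x = p, ∑ y ∈ (Bᶜ.map ι)ᶜ, b y = q at *
  generalize (Fintype.card X : ℝ) = n, (Fintype.card Y : ℝ) = m at *
  constructor
  · rw [sub_le_iff_le_add, ← add_div, div_le_div_iff₀ hn hm]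
    nlinarith [mul_nonneg (sub_nonneg.2 hnm) (by linarith : 0 ≤ n - c - #B)]
  · rw [sub_le_iff_le_add', ← sub_le_iff_le_add, ← sub_div, div_le_div_iff₀ hm hn]
    nlinarith

namespace SubgroupTest

variable {S Q : Type} [Fintype Q] (T : SubgroupTest S Q)

noncomputable def accept (i : Q) {Z : Type} (ρ : S → Equiv.Perm Z) (z : Z) : ℝ :=
  if T.D i ({w | FreeGroup.lift ρ w z = z} ∩ ↑(T.K i)) then 1 else 0

theorem accept_mem_Icc (i : Q) {Z : Type} (ρ : S → Equiv.Perm Z) (z : Z) :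
    T.accept i ρ z ∈ Set.Icc 0 1 := by
  unfold accept; split <;> norm_num

theorem testVal_eq_sum_accept {X : Type} [Fintype X] (ρ : S → Equiv.Perm X) :
    testVal T ρ = ∑ i, T.μ i * ((∑ x, T.accept i ρ x) / Fintype.card X) := by
  unfold testVal accept
  rw [sum_comm, sum_div]
  exact sum_congr rfl fun i _ => by rw [← mul_sum, mul_div_assoc]

theorem accept_eq_of_forall_eq_one {i : Q} (hK : ∀ w ∈ T.K i, w = 1) {Z : Type}
    (ρ : S → Equiv.Perm Z) (z : Z) : T.accept i ρ z = if T.D i ↑(T.K i) then 1 else 0 := by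
  rw [accept, Set.inter_eq_right.mpr fun w hw => by simp [hK w hw]]

theorem avg_accept_of_forall_eq_one {i : Q} (hK : ∀ w ∈ T.K i, w = 1) {Z : Type} [Fintype Z]
    [Nonempty Z] (ρ : S → Equiv.Perm Z) :
    (∑ z, T.accept i ρ z) / Fintype.card Z = if T.D i ↑(T.K i) then 1 else 0 := by
  simp only [T.accept_eq_of_forall_eq_one hK, sum_const, card_univ, nsmul_eq_mul]
  exact mul_div_cancel_left₀ _ (by positivity)

theorem accept_eq_of_forall_lift_eq {X Y : Type} (ι : X ↪ Y) {i : Q} {ρ : S → Equiv.Perm X}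
    {ψ : S → Equiv.Perm Y} {x : X}
    (h : ∀ w ∈ T.K i, ι (FreeGroup.lift ρ w x) = FreeGroup.lift ψ w (ι x)) :
    T.accept i ρ x = T.accept i ψ (ι x) := by
  unfold accept
  congr 3
  ext w
  simp only [Set.mem_inter_iff, Set.mem_ofPred_eq, Finset.mem_coe, and_congr_left_iff]
  intro hw
  rw [← h w hw, ι.injective.eq_iff]

theorem accept_conj (i : Q) {Y : Type} (φ : S → Equiv.Perm Y) (θ : Equiv.Perm Y) (y : Y) :
    T.accept i (fun s => θ * φ s * θ⁻¹) y = T.accept i φ (θ⁻¹ y) := by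
  have hlift : FreeGroup.lift (fun s => θ * φ s * θ⁻¹) =
      (MulAut.conj θ).toMonoidHom.comp (FreeGroup.lift φ) :=
    FreeGroup.ext_hom _ _ fun s => by simp [MulAut.conj_apply]
  unfold accept
  congr 3
  ext w
  simp only [Set.mem_inter_iff, Set.mem_ofPred_eq, hlift, MonoidHom.comp_apply,
    MulEquiv.coe_toMonoidHom, MulAut.conj_apply, Equiv.Perm.mul_apply, Equiv.Perm.eq_inv_iff_eq]

theorem testVal_conj {Y : Type} [Fintype Y] (φ : S → Equiv.Perm Y) (θ : Equiv.Perm Y) :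
    testVal T (fun s => θ * φ s * θ⁻¹) = testVal T φ := by
  simp only [testVal_eq_sum_accept, accept_conj]
  congr! 3
  exact Equiv.sum_comp θ⁻¹ (T.accept _ φ)

end SubgroupTest

section Hamming

variable {X Y : Type} [Fintype X] [Fintype Y] (ι : X ↪ Y)

noncomputable def genHammingDist (α : Equiv.Perm X) (β : Equiv.Perm Y) : ℝ :=
  1 - (Nat.card {x : X // ι (α x) = β (ι x)} : ℝ) / Fintype.card Y

theorem genHammingDist_eq [DecidableEq Y] [Nonempty X] (α : Equiv.Perm X) (β : Equiv.Perm Y) :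
    genHammingDist ι α β =
      ((Fintype.card Y : ℝ) - Fintype.card X + disagreeCount ι α β) / Fintype.card Y := by
  have : Nonempty Y := Nonempty.map ι ‹_›
  have hm : (Fintype.card Y : ℝ) ≠ 0 := by positivity
  have hcard : Nat.card {x : X // ι (α x) = β (ι x)} + disagreeCount ι α β = Fintype.card X := by
    rw [Nat.card_eq_fintype_card, Fintype.card_subtype, disagreeCount,
      card_filter_add_card_filter_not, card_univ]
  rw [genHammingDist, ← hcard]
  field_simp
  push_cast
  ring

theorem genHammingDist_nonneg [Nonempty X] (α : Equiv.Perm X) (β : Equiv.Perm Y) :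
    0 ≤ genHammingDist ι α β := by
  classical
  have hnm : (Fintype.card X : ℝ) ≤ Fintype.card Y := by
    exact_mod_cast Fintype.card_le_of_embedding ι
  rw [genHammingDist_eq]
  positivity

end Hamming

theorem FreeGroup.one_le_sum_count_toWord {S : Type} [Fintype S] [DecidableEq S]
    {w : FreeGroup S} (hw : w ≠ 1) : 1 ≤ ∑ s, (w.toWord.map Prod.fst).count s := by
  have hsum := Multiset.sum_count_eq_card (s := univ)
    (m := ((w.toWord.map Prod.fst : List S) : Multiset S)) fun s _ => mem_univ s
  simp only [Multiset.coe_count, Multiset.coe_card, List.length_map] at hsum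
  rw [hsum, Nat.one_le_iff_ne_zero, Ne, List.length_eq_zero_iff, FreeGroup.toWord_eq_nil_iff]
  exact hw

section Challenge

variable {S Q X Y : Type} [Fintype S] [DecidableEq S] [Fintype Q] [Fintype X] [Fintype Y]
  [Nonempty X] (T : SubgroupTest S Q) (ι : X ↪ Y) (ρ : S → Equiv.Perm X) (ψ : S → Equiv.Perm Y)

theorem abs_avg_accept_sub_le (i : Q) :
    |(∑ x, T.accept i ρ x) / Fintype.card X - (∑ y, T.accept i ψ y) / Fintype.card Y| ≤
      ∑ w ∈ T.K i, ∑ s, ((w.toWord.map Prod.fst).count s : ℝ) * genHammingDist ι (ρ s) (ψ s) := by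
  classical
  by_cases hK : ∀ w ∈ T.K i, w = 1
  · have : Nonempty Y := Nonempty.map ι ‹_›
    rw [T.avg_accept_of_forall_eq_one hK, T.avg_accept_of_forall_eq_one hK, sub_self, abs_zero]
    exact sum_nonneg fun w _ => sum_nonneg fun s _ =>
      mul_nonneg (Nat.cast_nonneg _) (genHammingDist_nonneg ι _ _)
  obtain ⟨w₀, hw₀, hw₀_ne⟩ : ∃ w ∈ T.K i, w ≠ 1 := by simpa using hK
  set bad : Finset X :=
    (T.K i).biUnion fun w => {x | ι (FreeGroup.lift ρ w x) ≠ FreeGroup.lift ψ w (ι x)}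
  have hagree : ∀ x ∉ bad, T.accept i ρ x = T.accept i ψ (ι x) := fun x hx =>
    T.accept_eq_of_forall_lift_eq ι (by simpa [bad] using hx)
  have hbad : (#bad : ℝ) ≤ ∑ w ∈ T.K i, ∑ s,
      ((w.toWord.map Prod.fst).count s : ℝ) * disagreeCount ι (ρ s) (ψ s) := by
    exact_mod_cast card_biUnion_le.trans (sum_le_sum fun w _ => disagreeCount_lift_le ι ρ ψ w)
  have hlen : (1 : ℝ) ≤ ∑ w ∈ T.K i, ∑ s, ((w.toWord.map Prod.fst).count s : ℝ) := by
    have h₀ : (1 : ℝ) ≤ ∑ s, ((w₀.toWord.map Prod.fst).count s : ℝ) := by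
      exact_mod_cast FreeGroup.one_le_sum_count_toWord hw₀_ne
    exact h₀.trans (single_le_sum (f := fun w => ∑ s, ((w.toWord.map Prod.fst).count s : ℝ))
      (fun w _ => by positivity) hw₀)
  have hnm : (Fintype.card X : ℝ) ≤ Fintype.card Y := by
    exact_mod_cast Fintype.card_le_of_embedding ι
  refine (abs_avg_sub_avg_le ι (T.accept_mem_Icc i ρ) (T.accept_mem_Icc i ψ) bad hagree).trans ?_
  simp only [genHammingDist_eq, mul_div_assoc', ← sum_div]
  gcongr
  simp only [mul_add, sum_add_distrib, ← sum_mul] at hbad ⊢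
  nlinarith

theorem sum_significance_mul (h : S → ℝ) :
    ∑ s, significance T s * h s =
      ∑ i, T.μ i * ∑ w ∈ T.K i, ∑ s, ((w.toWord.map Prod.fst).count s : ℝ) * h s := by
  simp only [significance, sum_mul, mul_sum, mul_assoc]
  rw [sum_comm]
  exact sum_congr rfl fun i _ => sum_comm

theorem abs_testVal_sub_le :
    |testVal T ρ - testVal T ψ| ≤ ∑ s, significance T s * genHammingDist ι (ρ s) (ψ s) := by
  rw [T.testVal_eq_sum_accept, T.testVal_eq_sum_accept, ← sum_sub_distrib, sum_significance_mul]
  refine (abs_sum_le_sum_abs _ _).trans (sum_le_sum fun i _ => ?_)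
  rw [← mul_sub, abs_mul, abs_of_nonneg (T.μ_nonneg i)]
  exact mul_le_mul_of_nonneg_left (abs_avg_accept_sub_le T ι ρ ψ i) (T.μ_nonneg i)

end Challenge

theorem testVal_close_of_editDist_le_general {S Q : Type} [Fintype S] [DecidableEq S] [Fintype Q]
    (T : SubgroupTest S Q) (X Y : Type) [Fintype X] [Fintype Y] [Nonempty X]
    (ι : X ↪ Y) (ρ : S → Equiv.Perm X) (φ : S → Equiv.Perm Y)
    (ε : ℝ)
    (h : weightedEditDist (significance T) ι ρ φ ≤ ε) :
    |testVal T ρ - testVal T φ| ≤ ε := by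
  have hconj (θ : Equiv.Perm Y) : |testVal T ρ - testVal T φ| ≤
      ∑ s, significance T s * genHammingDist ι (ρ s) (θ * φ s * θ⁻¹) := by
    rw [← T.testVal_conj φ θ]
    exact abs_testVal_sub_le T ι ρ _
  exact (le_ciInf hconj).trans h

/-- If two finite strategies are at `s_T`-weighted edit distance at most `ε`, then their
values against the test `T` differ by at most `ε`. -/
theorem testVal_close_of_editDist_le {S Q : Type} [Fintype S] [DecidableEq S] [Fintype Q]
    (T : SubgroupTest S Q) (X Y : Type) [Fintype X] [Fintype Y] [Nonempty X] [Nonempty Y]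
    (ι : X ↪ Y) (ρ : S → Equiv.Perm X) (φ : S → Equiv.Perm Y)
    (ε : ℝ) (hε : 0 < ε)
    (h : weightedEditDist (significance T) ι ρ φ ≤ ε) :
    |testVal T ρ - testVal T φ| ≤ ε :=
  testVal_close_of_editDist_le_general T X Y ι ρ φ ε h
end

section
/- Let X be a finite set, let ι ∈ Sym(X) be an involution with no fixed points, and let ζ ∈ Sym(X). Permutations act on functions f : X → ℂ by (σ.f)(x) = f(σ⁻¹x). Suppose that every function f : X → ℂ satisfying f(ι.x) = −f(x) for all x ∈ X is fixed by ζ, i.e., f(ζ⁻¹x) = f(x) for all x ∈ X. Then ζ is the identity permutation. -/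
/-! For each `x`, the function `δ_x - δ_(ι x)` flips sign along `ι` and, since `ι x ≠ x`, takes
the value `1` exactly at `x`. As `ζ` fixes it, its value at `ζ⁻¹ x` is `1` as well, so `ζ⁻¹ x = x`. -/

theorem Function.Involutive.single_sub_single_apply {X M : Type*} [DecidableEq X] [AddGroup M]
    {ι : X → X} (hι : Involutive ι) (x : X) (m : M) (y : X) :
    (Pi.single x m - Pi.single (ι x) m : X → M) (ι y) =
      -(Pi.single x m - Pi.single (ι x) m : X → M) y := by
  simp only [Pi.sub_apply, Pi.single_apply, hι.eq_iff, hι x, neg_sub]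

theorem eq_of_single_sub_single_apply_eq_one {X R : Type*} [DecidableEq X] [Ring R] [CharZero R]
    {a b y : X} (h : (Pi.single a 1 - Pi.single b 1 : X → R) y = 1) : y = a := by
  by_contra hya
  rw [Pi.sub_apply, Pi.single_apply, if_neg hya, Pi.single_apply] at h
  split_ifs at h <;> norm_num at h

theorem perm_eq_one_of_fixes_sign_flipping_general (X : Type*)
    (ι ζ : Equiv.Perm X) (hι2 : ι * ι = 1) (hιfree : ∀ x, ι x ≠ x)
    (h : ∀ f : X → ℂ, (∀ x, f (ι x) = - f x) → ∀ x, f (ζ⁻¹ x) = f x) :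
    ζ = 1 := by
  classical
  have hι : Function.Involutive ι := fun x => by
    rw [← Equiv.Perm.mul_apply, hι2, Equiv.Perm.one_apply]
  ext x
  have hfix := h _ (hι.single_sub_single_apply x 1) x
  have hx : (Pi.single x 1 - Pi.single (ι x) 1 : X → ℂ) x = 1 := by
    simp [(hιfree x).symm]
  exact (Equiv.Perm.inv_eq_iff_eq.mp
    (eq_of_single_sub_single_apply_eq_one (hfix.trans hx))).symm

/-- Let `ι ∈ Sym(X)` be a fixed-point-free involution of a finite set `X` and
`ζ ∈ Sym(X)`. If every function `f : X → ℂ` that flips sign along `ι`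
(`f(ι.x) = −f(x)`) is fixed by the action of `ζ` (`(ζ.f)(x) = f(ζ⁻¹ x) = f(x)`),
then `ζ` is the identity. -/
theorem perm_eq_one_of_fixes_sign_flipping (X : Type*) [Fintype X]
    (ι ζ : Equiv.Perm X) (hι2 : ι * ι = 1) (hιfree : ∀ x, ι x ≠ x)
    (h : ∀ f : X → ℂ, (∀ x, f (ι x) = - f x) → ∀ x, f (ζ⁻¹ x) = f x) :
    ζ = 1 :=
  perm_eq_one_of_fixes_sign_flipping_general X ι ζ hι2 hιfree h
end

section
/- Let X be a finite nonempty set, ε ≥ 0, and let ζ ∈ Sym(X) be an involution (ζ² = Id) with d_H(ζ, Id) ≥ 1 − ε. Then there exist a finite set Y containing X with |Y| = 2·⌈|X|/2⌉ and an involution τ ∈ Sym(Y) with no fixed points such that the generalized normalized Hamming distance satisfies d_H(ζ, τ) = 1 − |{x ∈ X : ζ(x) = τ(x)}| / |Y| ≤ 2ε. -/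
/-!
Let `M` be the set of points moved by `ζ`; it has even size because `ζ` is an involution.
Take `Y = M ⊔ (Fin m × Bool)` with `|Y| = 2⌈|X|/2⌉`, let `τ` act as `ζ` on `M` and swap the two
copies in `Fin m × Bool`, and send the fixed points of `ζ` injectively into `Fin m × Bool`.
Then `ζ` and `τ` agree exactly on `M`, and since `|Y| - |X| ≤ |X| - |M| ≤ ε|X|` the distance at
most doubles.
-/

open Equiv Function Finset

universe u

theorem one_sub_div_le_two_mul_of_one_sub_le_div {p n N : ℕ} {ε : ℝ} (hnN : n ≤ N)
    (hpN : p + N ≤ 2 * n) (hd : 1 - ε ≤ (p : ℝ) / n) : 1 - (p : ℝ) / N ≤ 2 * ε := by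
  rcases n.eq_zero_or_pos with rfl | hn
  · obtain rfl : N = 0 := by omega
    obtain rfl : p = 0 := by omega
    simp only [CharP.cast_eq_zero, div_zero] at hd ⊢
    linarith
  have hnN' : (n : ℝ) ≤ N := by exact_mod_cast hnN
  have hpN' : (p : ℝ) + N ≤ 2 * n := by exact_mod_cast hpN
  have hn' : (0 : ℝ) < n := by exact_mod_cast hn
  have hdef : (n : ℝ) - p ≤ ε * n := by
    rw [le_div_iff₀ hn'] at hd
    linarith
  have hε : 0 ≤ ε := nonneg_of_mul_nonneg_left (by linarith) hn'
  rw [one_sub_div (hn'.trans_le hnN').ne', div_le_iff₀ (hn'.trans_le hnN')]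
  calc (N : ℝ) - p ≤ 2 * (n - p) := by linarith
    _ ≤ 2 * ε * n := by linarith
    _ ≤ 2 * ε * N := by gcongr

namespace Equiv.Perm

variable {α : Type*}

theorem natCard_moved_eq_card_support [Fintype α] [DecidableEq α] (σ : Perm α) :
    Nat.card {x // σ x ≠ x} = #σ.support := by
  rw [← Nat.card_eq_finsetCard]
  exact Nat.card_congr (subtypeEquivRight fun _ => mem_support.symm)

theorem two_dvd_natCard_moved [Finite α] {σ : Perm α} (hσ : σ * σ = 1) :
    2 ∣ Nat.card {x // σ x ≠ x} := by
  classical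
  have := Fintype.ofFinite α
  rw [natCard_moved_eq_card_support]
  exact two_dvd_card_support (by rw [sq, hσ])

end Equiv.Perm

theorem natCard_agree_eq_natCard_moved {X Y : Type*} {ζ : X → X} (ι : X ↪ Y) {τ : Perm Y}
    (hτ : ∀ y, τ y ≠ y) (hι : ∀ x, ζ x ≠ x → ι (ζ x) = τ (ι x)) :
    Nat.card {x // ι (ζ x) = τ (ι x)} = Nat.card {x // ζ x ≠ x} :=
  Nat.card_congr <| subtypeEquivRight fun x =>
    ⟨fun h hx => hτ (ι x) (by rw [← h, hx]), hι x⟩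

theorem exists_fixedPointFree_involution_extending {X : Type u} [Fintype X] {ζ : Perm X}
    (hζ : ζ * ζ = 1) {N : ℕ} (hN : Even N) (hXN : Fintype.card X ≤ N) :
    ∃ (Y : Type u) (_ : Fintype Y) (ι : X ↪ Y) (τ : Perm Y),
      Nat.card Y = N ∧ τ * τ = 1 ∧ (∀ y, τ y ≠ y) ∧ ∀ x, ζ x ≠ x → ι (ζ x) = τ (ι x) := by
  classical
  let M := {x // ζ x ≠ x}
  obtain ⟨m, hm⟩ : ∃ m, N = Nat.card M + 2 * m := by
    have : 2 ∣ Nat.card M := Perm.two_dvd_natCard_moved hζ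
    have : Nat.card M ≤ Fintype.card X :=
      (Finite.card_subtype_le _).trans_eq Nat.card_eq_fintype_card
    obtain ⟨k, rfl⟩ := hN
    exact ⟨(k + k - Nat.card M) / 2, by omega⟩
  have hfixed : Fintype.card {x // ¬ζ x ≠ x} ≤ Fintype.card (Fin m × Bool) := by
    rw [Fintype.card_subtype_compl, ← Nat.card_eq_fintype_card (α := M)]
    simp only [Fintype.card_prod, Fintype.card_fin, Fintype.card_bool]
    omega
  obtain ⟨f⟩ := Embedding.nonempty_of_card_le hfixed
  let ι : X ↪ M ⊕ (Fin m × Bool) :=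
    (sumCompl _).symm.toEmbedding.trans ((Embedding.refl M).sumMap f)
  let τ : Perm (M ⊕ (Fin m × Bool)) :=
    sumCongr (ζ.subtypePerm fun _ => ζ.injective.ne_iff) (prodCongr (Equiv.refl _) boolNot)
  refine ⟨_, inferInstance, ι, τ, ?_, ?_, ?_, ?_⟩
  · simp [hm, mul_comm]
  · have hζζ : ∀ x, ζ (ζ x) = x := fun x => by rw [← Perm.mul_apply, hζ, Perm.one_apply]
    ext (⟨x, hx⟩ | ⟨i, b⟩)
    · exact congrArg Sum.inl (Subtype.ext (hζζ x))
    · simp [τ]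
  · rintro (⟨x, hx⟩ | ⟨i, b⟩)
    · simp only [τ, sumCongr_apply, Sum.map_inl, ne_eq, Sum.inl.injEq]
      exact fun h => hx (congrArg Subtype.val h)
    · simp [τ]
  · intro x hx
    have hζx : ζ (ζ x) ≠ ζ x := ζ.injective.ne hx
    simp only [ι, τ, Embedding.trans_apply, coe_toEmbedding]
    rw [sumCompl_symm_apply_of_pos (p := fun a => ζ a ≠ a) hx,
      sumCompl_symm_apply_of_pos (p := fun a => ζ a ≠ a) hζx]
    rfl

theorem exists_fixedPointFree_involution_close_general (X : Type) [Fintype X]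
    (ε : ℝ) (ζ : Equiv.Perm X) (hζ2 : ζ * ζ = 1)
    (hd : (Nat.card {x : X // ζ x ≠ x} : ℝ) / Fintype.card X ≥ 1 - ε) :
    ∃ (Y : Type) (_ : Fintype Y) (ι : X ↪ Y) (τ : Equiv.Perm Y),
      Nat.card Y = 2 * ((Fintype.card X + 1) / 2) ∧
      τ * τ = 1 ∧ (∀ y, τ y ≠ y) ∧
      1 - (Nat.card {x : X // ι (ζ x) = τ (ι x)} : ℝ) / Nat.card Y ≤ 2 * ε := by
  have hmoved_even := Perm.two_dvd_natCard_moved hζ2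
  have hmoved_le : Nat.card {x // ζ x ≠ x} ≤ Fintype.card X :=
    (Finite.card_subtype_le _).trans_eq Nat.card_eq_fintype_card
  obtain ⟨Y, hY_fin, ι, τ, hY, hτ2, hτ, hι⟩ := exists_fixedPointFree_involution_extending hζ2
    (N := 2 * ((Fintype.card X + 1) / 2)) (even_two_mul _) (by omega)
  refine ⟨Y, hY_fin, ι, τ, hY, hτ2, hτ, ?_⟩
  rw [natCard_agree_eq_natCard_moved ι hτ hι, hY]
  exact one_sub_div_le_two_mul_of_one_sub_le_div (by omega) (by omega) hd

/-- If `ζ` is an involution of a finite nonempty set `X` with `d_H(ζ, Id) ≥ 1 − ε`,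
then there are a finite set `Y ⊇ X` with `|Y| = 2⌈|X|/2⌉` and a fixed-point-free
involution `τ ∈ Sym(Y)` with generalized normalized Hamming distance
`d_H(ζ, τ) = 1 − |{x ∈ X : ζ(x) = τ(x)}|/|Y| ≤ 2ε`. -/
theorem exists_fixedPointFree_involution_close (X : Type) [Fintype X] [Nonempty X]
    (ε : ℝ) (hε : 0 ≤ ε) (ζ : Equiv.Perm X) (hζ2 : ζ * ζ = 1)
    (hd : (Nat.card {x : X // ζ x ≠ x} : ℝ) / Fintype.card X ≥ 1 - ε) :
    ∃ (Y : Type) (_ : Fintype Y) (ι : X ↪ Y) (τ : Equiv.Perm Y),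
      Nat.card Y = 2 * ((Fintype.card X + 1) / 2) ∧
      τ * τ = 1 ∧ (∀ y, τ y ≠ y) ∧
      1 - (Nat.card {x : X // ι (ζ x) = τ (ι x)} : ℝ) / Nat.card Y ≤ 2 * ε :=
  exists_fixedPointFree_involution_close_general X ε ζ hζ2 hd
end

section
/- Let X be a finite nonempty set and let ζ, τ ∈ Sym(X) be involutions (ζ² = τ² = Id). Then there exists an involution τ' ∈ Sym(X) such that τ' commutes with ζ ([τ', ζ] = Id) and d_H(τ, τ') ≤ d_H([τ, ζ], Id), where [τ, ζ] = τζτ⁻¹ζ⁻¹ is the commutator. -/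
/-- Almost commuting involutions are close to commuting involutions: for involutions
`ζ, τ ∈ Sym(X)`, there is an involution `τ'` commuting with `ζ` such that
`d_H(τ, τ') ≤ d_H([τ,ζ], Id)`, where `[τ,ζ] = τζτ⁻¹ζ⁻¹`. -/
theorem exists_commuting_involution_close (X : Type*) [Fintype X] [Nonempty X]
    (ζ τ : Equiv.Perm X) (hζ : ζ * ζ = 1) (hτ : τ * τ = 1) :
    ∃ τ' : Equiv.Perm X, τ' * τ' = 1 ∧ τ' * ζ = ζ * τ' ∧
      (Nat.card {x : X // τ x ≠ τ' x} : ℝ) / Fintype.card X ≤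
        (Nat.card {x : X // (τ * ζ * τ⁻¹ * ζ⁻¹) x ≠ x} : ℝ) / Fintype.card X := by
  classical
  have hζ2 : ∀ x, ζ (ζ x) = x := fun x => by
    have := congrArg (fun p : Equiv.Perm X => p x) hζ; simpa using this
  have hτ2 : ∀ x, τ (τ x) = x := fun x => by
    have := congrArg (fun p : Equiv.Perm X => p x) hτ; simpa using this
  have hζinv : ζ⁻¹ = ζ := by
    rw [inv_eq_iff_mul_eq_one]; exact hζ
  have hτinv : τ⁻¹ = τ := by
    rw [inv_eq_iff_mul_eq_one]; exact hτ
  set f : X → X := fun x => if τ (ζ x) = ζ (τ x) then τ x else x with hf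
  -- the "commuting set" is invariant under ζ and τ
  have hPζ : ∀ x, (τ (ζ (ζ x)) = ζ (τ (ζ x))) ↔ (τ (ζ x) = ζ (τ x)) := by
    intro x
    rw [hζ2]
    constructor
    · intro h
      have := congrArg ζ h
      rw [hζ2] at this
      exact this.symm
    · intro h
      have := congrArg ζ h.symm
      rw [hζ2] at this
      exact this
  have hPτ : ∀ x, (τ (ζ (τ x)) = ζ (τ (τ x))) ↔ (τ (ζ x) = ζ (τ x)) := by
    intro x
    rw [hτ2]
    constructor
    · intro h
      have := congrArg τ h
      rw [hτ2] at this
      exact this.symm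
    · intro h
      have := congrArg τ h.symm
      rw [hτ2] at this
      exact this
  have hff : ∀ x, f (f x) = x := by
    intro x
    by_cases h : τ (ζ x) = ζ (τ x)
    · simp only [hf, if_pos h, if_pos ((hPτ x).mpr h), hτ2]
    · simp only [hf, if_neg h]
  refine ⟨⟨f, f, hff, hff⟩, ?_, ?_, ?_⟩
  · ext x
    exact hff x
  · ext x
    show f (ζ x) = ζ (f x)
    by_cases h : τ (ζ x) = ζ (τ x)
    · simp only [hf, if_pos h, if_pos ((hPζ x).mpr h)]
      exact h
    · simp only [hf, if_neg h, if_neg (fun h' => h ((hPζ x).mp h'))]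
  · have hsub : ∀ x : X, τ x ≠ f x → (τ * ζ * τ⁻¹ * ζ⁻¹) x ≠ x := by
      intro x hx hc
      apply hx
      have hnp : ¬ τ (ζ x) = ζ (τ x) := by
        intro h
        exact hx (by simp [hf, if_pos h])
      apply hnp.elim
      -- from hc derive commuting at x
      simp only [hζinv, hτinv, Equiv.Perm.mul_apply] at hc
      have h1 := congrArg τ hc
      rw [hτ2] at h1
      have h2 := congrArg ζ h1
      rw [hζ2] at h2
      exact h2
    have hcard : Nat.card {x : X // τ x ≠ f x} ≤
        Nat.card {x : X // (τ * ζ * τ⁻¹ * ζ⁻¹) x ≠ x} := by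
      have : Function.Injective
          (fun y : {x : X // τ x ≠ f x} => (⟨y.1, hsub y.1 y.2⟩ :
            {x : X // (τ * ζ * τ⁻¹ * ζ⁻¹) x ≠ x})) := by
        intro a b hab
        exact Subtype.ext (by simpa using congrArg Subtype.val hab)
      exact Nat.card_le_card_of_injective _ this
    have hpos : (0 : ℝ) < Fintype.card X := by
      exact_mod_cast Fintype.card_pos
    exact div_le_div_of_nonneg_right (by exact_mod_cast hcard) hpos.le
end

section
/- Let G be a finite group, X a finite nonempty set, ε ≥ 0, and f : G → Sym(X) a function such that d_H(f(gh), f(g)f(h)) ≤ ε for all g, h ∈ G. Then there exists a group homomorphism φ : G → Sym(X) such that d_H(f(g), φ(g)) ≤ |G|²·ε for all g ∈ G. -/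
/-- Stability of finite groups (Glebsky–Rivera, special case): if `f : G → Sym(X)` is an
`ε`-almost action of a finite group `G` on a finite nonempty set `X`, i.e.
`d_H(f(gh), f(g)f(h)) ≤ ε` for all `g, h ∈ G`, then there is a genuine homomorphism
`φ : G → Sym(X)` with `d_H(f(g), φ(g)) ≤ |G|²·ε` for all `g ∈ G`. -/
theorem almost_action_close_to_action (G : Type*) [Group G] [Fintype G]
    (X : Type*) [Fintype X] [Nonempty X] (ε : ℝ) (hε : 0 ≤ ε)
    (f : G → Equiv.Perm X)
    (hf : ∀ g h : G,
      (Nat.card {x : X // f (g * h) x ≠ (f g * f h) x} : ℝ) / Fintype.card X ≤ ε) :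
    ∃ φ : G →* Equiv.Perm X,
      ∀ g : G, (Nat.card {x : X // f g x ≠ φ g x} : ℝ) / Fintype.card X ≤
        (Fintype.card G : ℝ) ^ 2 * ε := by
  classical
  set A : Set X := {x | ∀ g h : G, f (g * h) x = f g (f h x)} with hA
  have hAinv : ∀ (g : G) (x : X), x ∈ A → f g x ∈ A := by
    intro g x hx k l
    calc f (k * l) (f g x) = f (k * l * g) x := (hx (k * l) g).symm
      _ = f (k * (l * g)) x := by rw [mul_assoc]
      _ = f k (f (l * g) x) := hx k (l * g)
      _ = f k (f l (f g x)) := by rw [hx l g]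
  have hone : ∀ x ∈ A, f 1 x = x := by
    intro x hx
    have h := hx 1 1
    rw [one_mul] at h
    exact (f 1).injective h.symm
  have hcancel : ∀ (g : G) (x : X), x ∈ A → f g⁻¹ (f g x) = x := by
    intro g x hx
    have h := hx g⁻¹ g
    rw [inv_mul_cancel] at h
    rw [← h, hone x hx]
  have hcancel' : ∀ (g : G) (x : X), x ∈ A → f g (f g⁻¹ x) = x := by
    intro g x hx
    have h := hx g g⁻¹
    rw [mul_inv_cancel] at h
    rw [← h, hone x hx]
  let φfun : G → Equiv.Perm X := fun g =>
    { toFun := fun x => if x ∈ A then f g x else x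
      invFun := fun x => if x ∈ A then f g⁻¹ x else x
      left_inv := by
        intro x
        by_cases hx : x ∈ A
        · simp only [if_pos hx, if_pos (hAinv g x hx)]
          exact hcancel g x hx
        · simp [hx]
      right_inv := by
        intro x
        by_cases hx : x ∈ A
        · simp only [if_pos hx, if_pos (hAinv g⁻¹ x hx)]
          exact hcancel' g x hx
        · simp [hx] }
  have hφapp : ∀ (g : G) (x : X), φfun g x = if x ∈ A then f g x else x := by
    intro g x; rfl
  have hφmul : ∀ g h : G, φfun (g * h) = φfun g * φfun h := by
    intro g h
    ext x
    by_cases hx : x ∈ A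
    · simp only [Equiv.Perm.mul_apply, hφapp, if_pos hx, if_pos (hAinv h x hx)]
      exact hx g h
    · simp only [Equiv.Perm.mul_apply, hφapp, if_neg hx]
  refine ⟨MonoidHom.mk' φfun hφmul, ?_⟩
  intro g
  have hX : (0 : ℝ) < Fintype.card X := by
    exact_mod_cast Fintype.card_pos
  rw [div_le_iff₀ hX]
  -- step 1: the disagreement set is contained in the complement of A
  have step1 : Nat.card {x : X // f g x ≠ (MonoidHom.mk' φfun hφmul) g x}
      ≤ Nat.card {x : X // x ∉ A} := by
    simp only [Nat.card_eq_fintype_card]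
    apply Fintype.card_subtype_mono
    intro x hx hxA
    apply hx
    simp only [MonoidHom.mk'_apply, hφapp, if_pos hxA]
  -- step 2: the complement of A is contained in the union of pairwise bad sets
  have step2 : Nat.card {x : X // x ∉ A} ≤
      ∑ p : G × G, Nat.card {x : X // f (p.1 * p.2) x ≠ (f p.1 * f p.2) x} := by
    simp only [Nat.card_eq_fintype_card, Fintype.card_subtype]
    calc (Finset.univ.filter (fun x => x ∉ A)).card
        ≤ ((Finset.univ : Finset (G × G)).biUnion
            (fun p => Finset.univ.filter
              (fun x => f (p.1 * p.2) x ≠ (f p.1 * f p.2) x))).card := by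
          apply Finset.card_le_card
          intro x hx
          simp only [Finset.mem_filter, Finset.mem_univ, true_and] at hx
          simp only [hA, Set.mem_setOf_eq] at hx
          push_neg at hx
          obtain ⟨k, l, hkl⟩ := hx
          exact Finset.mem_biUnion.mpr ⟨(k, l), Finset.mem_univ _,
            Finset.mem_filter.mpr ⟨Finset.mem_univ _, hkl⟩⟩
      _ ≤ ∑ p : G × G, (Finset.univ.filter
            (fun x => f (p.1 * p.2) x ≠ (f p.1 * f p.2) x)).card :=
          Finset.card_biUnion_le
  -- each pairwise bad set has size at most ε * |X|
  have hterm : ∀ p : G × G,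
      (Nat.card {x : X // f (p.1 * p.2) x ≠ (f p.1 * f p.2) x} : ℝ) ≤
        ε * Fintype.card X := by
    intro p
    have := hf p.1 p.2
    rw [div_le_iff₀ hX] at this
    exact this
  calc (Nat.card {x : X // f g x ≠ (MonoidHom.mk' φfun hφmul) g x} : ℝ)
      ≤ (Nat.card {x : X // x ∉ A} : ℝ) := by exact_mod_cast step1
    _ ≤ ((∑ p : G × G,
          Nat.card {x : X // f (p.1 * p.2) x ≠ (f p.1 * f p.2) x} : ℕ) : ℝ) := by
        exact_mod_cast step2
    _ = ∑ p : G × G,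
          (Nat.card {x : X // f (p.1 * p.2) x ≠ (f p.1 * f p.2) x} : ℝ) := by
        push_cast; ring
    _ ≤ ∑ _p : G × G, ε * Fintype.card X := Finset.sum_le_sum fun p _ => hterm p
    _ = (Fintype.card (G × G) : ℝ) * (ε * Fintype.card X) := by
        rw [Finset.sum_const, Finset.card_univ, nsmul_eq_mul]
    _ = (Fintype.card G : ℝ) ^ 2 * ε * Fintype.card X := by
        rw [Fintype.card_prod]; push_cast; ring
end
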